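/- arXiv:1707.04297 — 3 statements merged into one kernel-verified Lean document; each statement's English description precedes it below -/
import Mathlib

section
/- Let G be a bipartite graph with vertex classes of size t each. If G contains no complete bipartite subgraph K_{s,s} (with s vertices on each side, respecting the bipartition), then G has at most 4·t^{2−1/s} edges. -/
/-
Double count the pairs `(a, T)` with `T` an `s`-subset of the neighbourhood of `a`: as no `s`-set
has `s` common neighbours, `∑ₐ C(dₐ, s) ≤ (s - 1) C(t, s)`. Since `(d + 1 - s)ˢ ≤ s! C(d, s)`, this
gives `∑ₐ (dₐ + 1 - s)ˢ ≤ (s - 1) tˢ`, and the power mean inequality turns it into a bound on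
`e = ∑ₐ dₐ`: `eˢ ≤ 2ˢ (s - 1) t^(2s - 1) ≤ 4ˢ t^(2s - 1)`.
-/

open SimpleGraph Finset

/-- `H` has a copy (an injective graph homomorphism image) in `G`. -/
def Copy {V W : Type*} (H : SimpleGraph W) (G : SimpleGraph V) : Prop :=
  ∃ f : H →g G, Function.Injective f

/-- `G → H`: every red/blue colouring of the edges of `G` (red edges given by a
subgraph `R ≤ G`, blue edges by `G \ R`) contains a monochromatic copy of `H`. -/
def Arrow {V W : Type*} (G : SimpleGraph V) (H : SimpleGraph W) : Prop :=
  ∀ R : SimpleGraph V, R ≤ G → Copy H R ∨ Copy H (G \ R)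

/-- The size-Ramsey number `r̂(H)`. -/
noncomputable def sizeRamsey {W : Type*} (H : SimpleGraph W) : ℕ :=
  sInf {m | ∃ (N : ℕ) (G : SimpleGraph (Fin N)), Arrow G H ∧ G.edgeSet.ncard = m}

/-- The (2-colour) Ramsey number `r(H)`. -/
noncomputable def ramseyNum {W : Type*} (H : SimpleGraph W) : ℕ :=
  sInf {N | Arrow (⊤ : SimpleGraph (Fin N)) H}

/-- The `k`-th power `H^k` of a graph: edges between distinct vertices at distance at most `k`. -/
def gpow {V : Type*} (H : SimpleGraph V) (k : ℕ) : SimpleGraph V where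
  Adj u v := u ≠ v ∧ ∃ p : H.Walk u v, p.length ≤ k
  symm := ⟨by rintro u v ⟨h, p, hp⟩; exact ⟨h.symm, p.reverse, by simpa using hp⟩⟩
  loopless := ⟨by rintro u ⟨h, -⟩; exact h rfl⟩

/-- The complete blow-up of `H` where each vertex is replaced by a clique of size `m`. -/
def blowup {V : Type*} (H : SimpleGraph V) (m : ℕ) : SimpleGraph (V × Fin m) where
  Adj x y := (x.1 = y.1 ∧ x.2 ≠ y.2) ∨ H.Adj x.1 y.1
  symm := ⟨by rintro x y (⟨h1, h2⟩ | h); exacts [Or.inl ⟨h1.symm, h2.symm⟩, Or.inr h.symm]⟩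
  loopless := ⟨by rintro x (⟨-, h⟩ | h); exacts [h rfl, H.loopless.irrefl _ h]⟩

/-- `P_n^k`, the `k`-th power of the path on `n` vertices. -/
def pathPow (n k : ℕ) : SimpleGraph (Fin n) where
  Adj i j := i ≠ j ∧ i.val - j.val ≤ k ∧ j.val - i.val ≤ k
  symm := ⟨by rintro i j ⟨h, h1, h2⟩; exact ⟨h.symm, h2, h1⟩⟩
  loopless := ⟨by rintro i ⟨h, -⟩; exact h rfl⟩

/-- `C_n^k`, the `k`-th power of the cycle on `n` vertices. -/
def cyclePow (n k : ℕ) : SimpleGraph (ZMod n) where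
  Adj i j := i ≠ j ∧ ∃ d : ℕ, 1 ≤ d ∧ d ≤ k ∧ (i = j + (d : ZMod n) ∨ j = i + (d : ZMod n))
  symm := ⟨by rintro i j ⟨h, d, h1, h2, h3⟩; exact ⟨h.symm, d, h1, h2, h3.symm⟩⟩
  loopless := ⟨by rintro i ⟨h, -⟩; exact h rfl⟩

def ContainsBiclique {α β : Type*} (r : α → β → Prop) (s : ℕ) : Prop :=
  ∃ (S : Finset α) (T : Finset β), #S = s ∧ #T = s ∧ ∀ a ∈ S, ∀ b ∈ T, r a b

section Biclique

variable {α β : Type*} [Fintype α] [Fintype β] (r : α → β → Prop) [DecidableRel r]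

theorem ncard_setOf_eq_sum_card_bipartiteAbove :
    {p : α × β | r p.1 p.2}.ncard = ∑ a, #(univ.bipartiteAbove r a) := by
  rw [Set.ncard_eq_toFinset_card', Set.toFinset_ofPred]
  simp only [card_filter, Fintype.sum_prod_type, bipartiteAbove]

theorem sum_choose_card_bipartiteAbove_le [DecidableEq β] {s : ℕ}
    (h : ¬ ContainsBiclique r s) :
    ∑ a, (#(univ.bipartiteAbove r a)).choose s ≤ (s - 1) * (Fintype.card β).choose s := by
  let sub (a : α) (T : Finset β) : Prop := T ⊆ univ.bipartiteAbove r a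
  have above (a : α) :
      #((powersetCard s univ).bipartiteAbove sub a) = (#(univ.bipartiteAbove r a)).choose s := by
    rw [← card_powersetCard]
    congr 1
    ext T
    simp [sub, mem_powersetCard, and_comm]
  have below : ∀ T ∈ powersetCard s univ, #(univ.bipartiteBelow sub T) ≤ s - 1 := by
    intro T hT
    by_contra! hlt
    obtain ⟨S, hS, hScard⟩ := exists_subset_card_eq (show s ≤ #(univ.bipartiteBelow sub T) by omega)
    refine h ⟨S, T, hScard, (mem_powersetCard.1 hT).2, fun a ha b hb => ?_⟩
    exact ((mem_bipartiteAbove r).1 (((mem_bipartiteBelow sub).1 (hS ha)).2 hb)).2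
  calc ∑ a, (#(univ.bipartiteAbove r a)).choose s
      = ∑ T ∈ powersetCard s univ, #(univ.bipartiteBelow sub T) := by
        simp_rw [← above]
        exact sum_card_bipartiteAbove_eq_sum_card_bipartiteBelow sub
    _ ≤ #(powersetCard s (univ : Finset β)) • (s - 1) := sum_le_card_nsmul _ _ _ below
    _ = (s - 1) * (Fintype.card β).choose s := by
        rw [card_powersetCard, card_univ, smul_eq_mul, mul_comm]

theorem sum_pow_card_bipartiteAbove_add_one_sub_le [DecidableEq β] {s : ℕ}
    (h : ¬ ContainsBiclique r s) :
    ∑ a, (#(univ.bipartiteAbove r a) + 1 - s) ^ s ≤ (s - 1) * Fintype.card β ^ s :=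
  calc ∑ a, (#(univ.bipartiteAbove r a) + 1 - s) ^ s
      ≤ ∑ a, s.factorial * (#(univ.bipartiteAbove r a)).choose s := by
        gcongr with a
        rw [← Nat.descFactorial_eq_factorial_mul_choose]
        exact Nat.pow_sub_le_descFactorial _ s
    _ ≤ s.factorial * ((s - 1) * (Fintype.card β).choose s) := by
        rw [← mul_sum]
        gcongr
        exact sum_choose_card_bipartiteAbove_le r h
    _ = (s - 1) * (Fintype.card β).descFactorial s := by
        rw [Nat.descFactorial_eq_factorial_mul_choose]
        ring
    _ ≤ (s - 1) * Fintype.card β ^ s := by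
        gcongr
        exact Nat.descFactorial_le_pow _ _

end Biclique

theorem pow_sum_le_of_sum_pow_add_one_sub_le {ι : Type*} [Fintype ι] {d : ι → ℕ} {s : ℕ}
    (hs : 0 < s) (hd : ∀ i, d i ≤ Fintype.card ι)
    (h : ∑ i, (d i + 1 - s) ^ s ≤ (s - 1) * Fintype.card ι ^ s) :
    (∑ i, d i) ^ s ≤ 2 ^ s * (s - 1) * Fintype.card ι ^ (2 * s - 1) := by
  obtain ⟨k, rfl⟩ := Nat.exists_eq_add_one_of_ne_zero hs.ne'
  set n := Fintype.card ι
  set e := ∑ i, d i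
  simp only [Nat.add_sub_cancel, Nat.add_sub_add_right] at h ⊢
  have hexp : 2 * (k + 1) - 1 = k + (k + 1) := by omega
  rw [hexp]
  -- Few edges: `e ≤ n²` suffices. Many edges: the shift `d i ↦ d i - k` keeps half of `e`,
  -- and the power mean inequality applies to the shifted degrees.
  rcases le_or_gt e (2 * (k * n)) with he | he
  · have hen : e ≤ n * n := by
      calc e ≤ ∑ _i : ι, n := sum_le_sum fun i _ => hd i
        _ = n * n := by rw [sum_const, card_univ, smul_eq_mul]
    calc e ^ (k + 1) = e ^ k * e := pow_succ e k
      _ ≤ (n * n) ^ k * (2 * (k * n)) := by gcongr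
      _ = 2 * k * n ^ (k + (k + 1)) := by ring
      _ ≤ 2 ^ (k + 1) * k * n ^ (k + (k + 1)) := by
        gcongr
        exact le_self_pow₀ one_le_two (by omega)
  · have hsum : e ≤ 2 * ∑ i, (d i - k) := by
      have hshift : e ≤ ∑ i, (d i - k) + k * n := by
        calc e ≤ ∑ i, ((d i - k) + k) := sum_le_sum fun i _ => by omega
          _ = ∑ i, (d i - k) + k * n := by
            rw [sum_add_distrib, sum_const, card_univ, smul_eq_mul, mul_comm]
      omega
    calc e ^ (k + 1) ≤ (2 * ∑ i, (d i - k)) ^ (k + 1) := by gcongr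
      _ = 2 ^ (k + 1) * (∑ i, (d i - k)) ^ (k + 1) := mul_pow _ _ _
      _ ≤ 2 ^ (k + 1) * (n ^ k * ∑ i, (d i - k) ^ (k + 1)) := by
        gcongr
        simpa using pow_sum_le_card_mul_sum_pow (s := univ) (f := fun i => d i - k)
          (fun i _ => Nat.zero_le _) k
      _ ≤ 2 ^ (k + 1) * (n ^ k * (k * n ^ (k + 1))) := by gcongr
      _ = 2 ^ (k + 1) * k * n ^ (k + (k + 1)) := by ring

theorem le_mul_rpow_div_of_pow_le {x c t : ℝ} {s m : ℕ} (hs : 0 < s) (hx : 0 ≤ x) (hc : 0 ≤ c)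
    (ht : 0 ≤ t) (h : x ^ s ≤ c ^ s * t ^ m) : x ≤ c * t ^ ((m : ℝ) / s) := by
  have hpow : (c * t ^ ((m : ℝ) / s)) ^ s = c ^ s * t ^ m := by
    rw [mul_pow, ← Real.rpow_mul_natCast ht, div_mul_cancel₀ _ (by positivity), Real.rpow_natCast]
  rw [← pow_le_pow_iff_left₀ hx (by positivity) hs.ne', hpow]
  exact h

/-- Kővári–Sós–Turán. A balanced bipartite graph (given by the relation `R`
between two sides of size `t`) with no `K_{s,s}` has at most `4 t^{2-1/s}` edges. -/
theorem stmt_4 (s t : ℕ) (hs : 0 < s) (R : Fin t → Fin t → Prop)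
    (h : ¬ ∃ (S T : Finset (Fin t)), S.card = s ∧ T.card = s ∧ ∀ a ∈ S, ∀ b ∈ T, R a b) :
    ({p : Fin t × Fin t | R p.1 p.2}.ncard : ℝ) ≤ 4 * (t : ℝ) ^ (2 - 1 / (s : ℝ)) := by
  classical
  have hconst : 2 ^ s * (s - 1) ≤ 4 ^ s :=
    calc 2 ^ s * (s - 1) ≤ 2 ^ s * 2 ^ s := by
          gcongr
          exact (Nat.sub_le s 1).trans Nat.lt_two_pow_self.le
      _ = 4 ^ s := by rw [← mul_pow]; norm_num
  have hedges : {p : Fin t × Fin t | R p.1 p.2}.ncard ^ s ≤ 4 ^ s * t ^ (2 * s - 1) := by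
    rw [ncard_setOf_eq_sum_card_bipartiteAbove]
    calc _ ≤ 2 ^ s * (s - 1) * Fintype.card (Fin t) ^ (2 * s - 1) :=
          pow_sum_le_of_sum_pow_add_one_sub_le hs (fun a => card_le_univ _)
            (sum_pow_card_bipartiteAbove_add_one_sub_le R h)
      _ ≤ 4 ^ s * t ^ (2 * s - 1) := by rw [Fintype.card_fin]; gcongr
  have hexp : (2 : ℝ) - 1 / s = ((2 * s - 1 : ℕ) : ℝ) / s := by
    rw [Nat.cast_sub (by omega)]
    field_simp
    push_cast
    ring
  rw [hexp]
  refine le_mul_rpow_div_of_pow_le hs (by positivity) (by positivity) (by positivity) ?_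
  exact_mod_cast hedges
end

section
/- Let G be a graph on 2an vertices with at most (4a²c)n edges, and suppose every pair of disjoint vertex sets of size εn each is joined by at least one edge. Let H be obtained from G by iteratively deleting a vertex of maximum degree until an vertices remain. Then H has maximum degree at most 4ac, and every pair of disjoint vertex sets of H of size εn each is still joined by at least one edge. -/
open SimpleGraph Finset

/-!
If some surviving vertex `w` had more than `4ac` neighbours among the survivors, then at every
step the deleted vertex, having maximum degree in the current set, which still contains `w`, had
more than `4ac` neighbours there too. Deleting a vertex removes exactly its edges into the current
set, so the `an` deletions would remove more than `4ac · an` edges, more than `G` has. The joining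
property is inherited by subsets of the vertex set.
-/

namespace SimpleGraph
variable {V : Type*} [Fintype V] [DecidableEq V] (G : SimpleGraph V) [DecidableRel G.Adj]

lemma ncard_neighborSet_inter (v : V) (T : Finset V) :
    (G.neighborSet v ∩ ↑T).ncard = #(G.neighborFinset v ∩ T) := by
  rw [← Set.ncard_coe_finset, coe_inter, coe_neighborFinset]

lemma card_edgeFinset_inter_sym2_erase {v : V} {T : Finset V} (hv : v ∈ T) :
    #(G.edgeFinset ∩ (T.erase v).sym2) + #(G.neighborFinset v ∩ T) =
      #(G.edgeFinset ∩ T.sym2) := by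
  have h_avoid : (G.edgeFinset ∩ T.sym2).filter (v ∉ ·) = G.edgeFinset ∩ (T.erase v).sym2 := by
    ext e
    induction e using Sym2.ind
    simp only [mem_filter, mem_inter, mk_mem_sym2_iff, mem_erase, Sym2.mem_iff]
    tauto
  have h_touch : (G.edgeFinset ∩ T.sym2).filter (v ∈ ·) =
      (G.neighborFinset v ∩ T).image (s(v, ·)) := by
    ext e
    induction e using Sym2.ind
    simp only [mem_filter, mem_inter, mk_mem_sym2_iff, Sym2.mem_iff, mem_image, mem_edgeFinset,
      mem_edgeSet, mem_neighborFinset]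
    grind [Sym2.eq_swap, G.adj_symm]
  rw [← h_avoid, ← card_filter_add_card_filter_not (fun e => v ∈ e) (s := G.edgeFinset ∩ T.sym2),
    h_touch, card_image_of_injective _ (fun _ _ => Sym2.congr_right.mp), add_comm]

lemma mul_add_card_edgeFinset_inter_sym2_le {S : ℕ → Finset V} {m d : ℕ}
    (h : ∀ i < m, ∃ v ∈ S i, d ≤ (G.neighborSet v ∩ ↑(S i)).ncard ∧ S (i + 1) = (S i).erase v) :
    m * d + #(G.edgeFinset ∩ (S m).sym2) ≤ #(G.edgeFinset ∩ (S 0).sym2) := by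
  induction m with
  | zero => simp
  | succ k ih =>
    obtain ⟨v, hv, hdeg, hnext⟩ := h k k.lt_succ_self
    have := G.card_edgeFinset_inter_sym2_erase hv
    rw [ncard_neighborSet_inter] at hdeg
    rw [hnext]
    linarith [ih fun i hi => h i (hi.trans k.lt_succ_self)]

end SimpleGraph

namespace Finset
variable {V : Type*} {S : ℕ → Finset V} {m : ℕ}

lemma subset_of_succ_subset (h : ∀ i < m, S (i + 1) ⊆ S i) {i : ℕ} (hi : i ≤ m) : S m ⊆ S i := by
  induction hi using Nat.decreasingInduction with
  | self => rfl
  | of_succ k hk ih => exact ih.trans (h k hk)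

lemma card_add_eq_of_erase [DecidableEq V] (h : ∀ i < m, ∃ v ∈ S i, S (i + 1) = (S i).erase v) :
    #(S m) + m = #(S 0) := by
  induction m with
  | zero => simp
  | succ k ih =>
    obtain ⟨v, hv, hnext⟩ := h k k.lt_succ_self
    rw [hnext, card_erase_of_mem hv, ← ih fun i hi => h i (hi.trans k.lt_succ_self)]
    have := card_pos.mpr ⟨v, hv⟩
    omega

end Finset

theorem stmt_6_general (a c n : ℕ) (ε : ℝ)
    (G : SimpleGraph (Fin (2 * a * n)))
    (hbig : G.edgeSet.ncard < 4 * a * c * (a * n))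
    (hjoin : ∀ S T : Finset (Fin (2 * a * n)), Disjoint S T →
      ε * n ≤ (S.card : ℝ) → ε * n ≤ (T.card : ℝ) → ∃ u ∈ S, ∃ v ∈ T, G.Adj u v)
    (m : ℕ) (S : ℕ → Finset (Fin (2 * a * n)))
    (hS0 : S 0 = Finset.univ)
    (hstep : ∀ i < m, ∃ v ∈ S i,
      (∀ u ∈ S i, (G.neighborSet u ∩ ↑(S i)).ncard ≤ (G.neighborSet v ∩ ↑(S i)).ncard) ∧
      S (i + 1) = (S i).erase v)
    (hcard : (S m).card = a * n) :
    (∀ v ∈ S m, (G.neighborSet v ∩ ↑(S m)).ncard ≤ 4 * a * c) ∧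
    (∀ A B : Finset (Fin (2 * a * n)), A ⊆ S m → B ⊆ S m → Disjoint A B →
      ε * n ≤ (A.card : ℝ) → ε * n ≤ (B.card : ℝ) → ∃ u ∈ A, ∃ v ∈ B, G.Adj u v) := by
  classical
  refine ⟨fun w hw => ?_, fun A B _ _ => hjoin A B⟩
  by_contra! hdeg
  have hsub : ∀ i ≤ m, S m ⊆ S i := fun i => subset_of_succ_subset fun i hi => by
    obtain ⟨v, -, -, hnext⟩ := hstep i hi
    exact hnext ▸ erase_subset v (S i)
  have hm : m = a * n := by
    have := card_add_eq_of_erase fun i hi => (hstep i hi).imp fun v ⟨hv, _, hnext⟩ => ⟨hv, hnext⟩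
    rw [hS0, card_univ, Fintype.card_fin, hcard] at this
    linarith
  have hdel : ∀ i < m, ∃ v ∈ S i, 4 * a * c + 1 ≤ (G.neighborSet v ∩ ↑(S i)).ncard ∧
      S (i + 1) = (S i).erase v := by
    intro i hi
    obtain ⟨v, hv, hmax, hnext⟩ := hstep i hi
    refine ⟨v, hv, ?_, hnext⟩
    calc 4 * a * c + 1 ≤ (G.neighborSet w ∩ ↑(S m)).ncard := hdeg
      _ ≤ (G.neighborSet w ∩ ↑(S i)).ncard :=
        Set.ncard_le_ncard (by gcongr; exact hsub i hi.le)
      _ ≤ (G.neighborSet v ∩ ↑(S i)).ncard := hmax w (hsub i hi.le hw)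
  have hedges : #(G.edgeFinset ∩ (S 0).sym2) ≤ G.edgeSet.ncard := by
    rw [← coe_edgeFinset, Set.ncard_coe_finset]
    exact card_le_card inter_subset_left
  have hremoved := G.mul_add_card_edgeFinset_inter_sym2_le hdel
  subst hm
  nlinarith

/-- deleting vertices of maximum degree from `G` until `an` vertices remain
yields an induced subgraph of maximum degree at most `4ac` that still joins every pair of
disjoint `εn`-sets by an edge. -/
theorem stmt_6 (a c n : ℕ) (ha : 0 < a) (hc : 0 < c) (hn : 0 < n) (ε : ℝ) (hε : 0 < ε)
    (G : SimpleGraph (Fin (2 * a * n)))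
    (hE : G.edgeSet.ncard ≤ 4 * a ^ 2 * c * n)
    (hbig : G.edgeSet.ncard < 4 * a * c * (a * n))
    (hjoin : ∀ S T : Finset (Fin (2 * a * n)), Disjoint S T →
      ε * n ≤ (S.card : ℝ) → ε * n ≤ (T.card : ℝ) → ∃ u ∈ S, ∃ v ∈ T, G.Adj u v)
    (m : ℕ) (S : ℕ → Finset (Fin (2 * a * n)))
    (hS0 : S 0 = Finset.univ)
    (hstep : ∀ i < m, ∃ v ∈ S i,
      (∀ u ∈ S i, (G.neighborSet u ∩ ↑(S i)).ncard ≤ (G.neighborSet v ∩ ↑(S i)).ncard) ∧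
      S (i + 1) = (S i).erase v)
    (hcard : (S m).card = a * n) :
    (∀ v ∈ S m, (G.neighborSet v ∩ ↑(S m)).ncard ≤ 4 * a * c) ∧
    (∀ A B : Finset (Fin (2 * a * n)), A ⊆ S m → B ⊆ S m → Disjoint A B →
      ε * n ≤ (A.card : ℝ) → ε * n ≤ (B.card : ℝ) → ∃ u ∈ A, ∃ v ∈ B, G.Adj u v) :=
  stmt_6_general a c n ε G hbig hjoin m S hS0 hstep hcard
end

section
/- Let s = 2k and suppose (X_i, Y_{i+1}) for 1 ≤ i ≤ n−1 are pairs of s-element sets with X_i, Y_i ⊆ B_i for cliques B₁,…,B_n, where all edges inside each B_i and all edges between X_i and Y_{i+1} are blue. Choose X'_i ⊆ X_i and Y'_i ⊆ Y_i with |X'_i| = |Y'_i| = k and X'_i ∩ Y'_i = ∅ for 2 ≤ i ≤ n−1, and set X'_1 = X_1, Y'_n = Y_n. Then the 2kn vertices of U = ⋃ X'_i ∪ ⋃ Y'_i, ordered so that within each index i the vertices of Y'_i precede those of X'_i and those of X'_i precede those of Y'_{i+1}, form a blue copy of P_{2kn}^k. -/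
open SimpleGraph Finset

namespace BlockSequence

variable {V : Type*} {N m : ℕ} {u : Fin N → V} {b : ℕ → Finset V}

theorem subset_range_of_sum_card_le [DecidableEq V] (hu : Function.Injective u)
    (hmem : ∀ j, ∃ t < m, u j ∈ b t) (hsum : ∑ t ∈ range m, #(b t) ≤ N)
    {t : ℕ} (ht : t < m) : ↑(b t) ⊆ Set.range u := by
  have himage : univ.image u ⊆ (range m).biUnion b := fun v hv => by
    obtain ⟨j, -, rfl⟩ := mem_image.1 hv
    obtain ⟨s, hs, hj⟩ := hmem j
    exact mem_biUnion.2 ⟨s, mem_range.2 hs, hj⟩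
  have hcard : #((range m).biUnion b) ≤ #(univ.image u) := calc
    #((range m).biUnion b) ≤ ∑ t ∈ range m, #(b t) := card_biUnion_le
    _ ≤ N := hsum
    _ = #(univ.image u) := by rw [card_image_of_injective _ hu, card_univ, Fintype.card_fin]
  intro v hv
  have hv' : v ∈ univ.image u :=
    eq_of_subset_of_card_le himage hcard ▸ subset_biUnion_of_mem b (mem_range.2 ht) hv
  obtain ⟨j, -, rfl⟩ := mem_image.1 hv'
  exact ⟨j, rfl⟩

theorem lt_of_mem_of_mem (hcov : ∀ t < m, ↑(b t) ⊆ Set.range u)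
    (hne : ∀ t, 0 < t → t + 1 < m → (b t).Nonempty)
    (horder : ∀ t, t + 1 < m → ∀ a c, u a ∈ b t → u c ∈ b (t + 1) → a < c)
    {a c : Fin N} {t t' : ℕ} (htt' : t < t') (ht' : t' < m) (ha : u a ∈ b t) (hc : u c ∈ b t') :
    a < c := by
  induction t', htt' using Nat.le_induction generalizing c with
  | base => exact horder t ht' a c ha hc
  | succ s hts ih =>
    obtain ⟨v, hv⟩ := hne s (by omega) ht'
    obtain ⟨d, rfl⟩ := hcov s (by omega) hv
    exact (ih (by omega) hv).trans (horder s ht' d c hv hc)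

theorem card_lt_sub_of_mem_of_mem [DecidableEq V] (hcov : ∀ t < m, ↑(b t) ⊆ Set.range u)
    (hne : ∀ t, 0 < t → t + 1 < m → (b t).Nonempty)
    (horder : ∀ t, t + 1 < m → ∀ a c, u a ∈ b t → u c ∈ b (t + 1) → a < c)
    {a c : Fin N} {t s t' : ℕ} (hts : t < s) (hst' : s < t') (ht' : t' < m)
    (ha : u a ∈ b t) (hc : u c ∈ b t') : #(b s) < (c : ℕ) - a := by
  have hsub : b s ⊆ (Ioo a c).image u := fun v hv => by
    obtain ⟨d, rfl⟩ := hcov s (by omega) hv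
    exact mem_image_of_mem u (mem_Ioo.2
      ⟨lt_of_mem_of_mem hcov hne horder hts (by omega) ha hv,
        lt_of_mem_of_mem hcov hne horder hst' ht' hv hc⟩)
  have hac : a < c := lt_of_mem_of_mem hcov hne horder (hts.trans hst') ht' ha hc
  have hcard := (card_le_card hsub).trans card_image_le
  rw [Fin.card_Ioo] at hcard
  omega

theorem adj_of_lt_of_le_add [DecidableEq V] (G : SimpleGraph V) {k : ℕ}
    (hu : Function.Injective u)
    (hmem : ∀ j, ∃ t < m, u j ∈ b t) (hsum : ∑ t ∈ range m, #(b t) ≤ N)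
    (hbig : ∀ t, 0 < t → t + 1 < m → k ≤ #(b t))
    (horder : ∀ t, t + 1 < m → ∀ a c, u a ∈ b t → u c ∈ b (t + 1) → a < c)
    (hclique : ∀ t < m, G.IsClique (b t : Set V))
    (hjoin : ∀ t, t + 1 < m → ∀ x ∈ b t, ∀ y ∈ b (t + 1), x ≠ y → G.Adj x y)
    {j j' : Fin N} (hjj' : j < j') (hj' : (j' : ℕ) ≤ j + k) : G.Adj (u j) (u j') := by
  have hcov := fun t (ht : t < m) => subset_range_of_sum_card_le hu hmem hsum ht
  have hne : ∀ t, 0 < t → t + 1 < m → (b t).Nonempty := fun t h0 h1 =>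
    card_pos.1 (lt_of_lt_of_le (by omega) (hbig t h0 h1))
  have hne' : u j ≠ u j' := hu.ne hjj'.ne
  obtain ⟨t, ht, hj⟩ := hmem j
  obtain ⟨t', ht', hj'⟩ := hmem j'
  rcases lt_trichotomy t' t with hlt | heq | hgt
  · exact absurd (lt_of_mem_of_mem hcov hne horder hlt ht hj' hj) hjj'.not_gt
  · exact hclique t ht hj (heq ▸ hj') hne'
  obtain rfl | hgt := (show t + 1 ≤ t' from hgt).eq_or_lt
  · exact hjoin t ht' _ hj _ hj' hne'
  have hgap := card_lt_sub_of_mem_of_mem hcov hne horder (Nat.lt_add_one t) hgt ht' hj hj'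
  have hk := hbig (t + 1) (by omega) (by omega)
  omega

end BlockSequence

theorem sum_range_add_two_eq_of_const {f : ℕ → ℕ} {m c : ℕ} (hf : ∀ t, 0 < t → t ≤ m → f t = c) :
    ∑ t ∈ range (m + 2), f t = f 0 + m * c + f (m + 1) := by
  rw [sum_range_succ, sum_range_succ', sum_congr rfl fun t ht => hf (t + 1) t.succ_pos
    (mem_range.1 ht), sum_const, card_range, smul_eq_mul]
  ring

-- The blocks `X'_1, Y'_2, X'_2, Y'_3, …, X'_{n-1}, Y'_n` in the order of the path.
def interleave {V : Type*} (X' Y' : ℕ → Finset V) (t : ℕ) : Finset V :=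
  if Even t then X' (t / 2 + 1) else Y' (t / 2 + 2)

section interleave

variable {V : Type*} (X' Y' : ℕ → Finset V)

@[simp] theorem interleave_two_mul (i : ℕ) : interleave X' Y' (2 * i) = X' (i + 1) := by
  simp [interleave]

@[simp] theorem interleave_zero : interleave X' Y' 0 = X' 1 :=
  interleave_two_mul X' Y' 0

@[simp] theorem interleave_two_mul_add_one (i : ℕ) :
    interleave X' Y' (2 * i + 1) = Y' (i + 2) := by
  simp [interleave, Nat.add_div_of_dvd_right]

@[simp] theorem interleave_two_mul_add_two (i : ℕ) :
    interleave X' Y' (2 * i + 1 + 1) = X' (i + 2) := by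
  simpa [mul_add] using interleave_two_mul X' Y' (i + 1)

variable {X' Y'}

theorem exists_mem_interleave_of_mem_union [DecidableEq V] {n : ℕ} {v : V}
    (hv : v ∈ (Icc 1 (n - 1)).biUnion X' ∪ (Icc 2 n).biUnion Y') :
    ∃ t < 2 * n - 2, v ∈ interleave X' Y' t := by
  rcases mem_union.1 hv with h | h <;> obtain ⟨i, hi, hvi⟩ := mem_biUnion.1 h <;>
    rw [mem_Icc] at hi
  · exact ⟨2 * (i - 1), by omega, by rwa [interleave_two_mul, Nat.sub_add_cancel hi.1]⟩
  · exact ⟨2 * (i - 2) + 1, by omega, by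
      rwa [interleave_two_mul_add_one, Nat.sub_add_cancel hi.1]⟩

theorem sum_card_interleave {n k : ℕ} (hn : 2 ≤ n) (hfirst : #(X' 1) = 2 * k)
    (hlast : #(Y' n) = 2 * k)
    (hinner : ∀ t, 0 < t → t + 1 < 2 * n - 2 → #(interleave X' Y' t) = k) :
    ∑ t ∈ range (2 * n - 2), #(interleave X' Y' t) = 2 * k * n := by
  obtain ⟨p, rfl⟩ := Nat.exists_eq_add_of_le' hn
  rw [show 2 * (p + 2) - 2 = 2 * p + 2 by omega,
    sum_range_add_two_eq_of_const fun t h0 ht => hinner t h0 (by omega),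
    interleave_zero, interleave_two_mul_add_one, hfirst, hlast]
  ring

end interleave

theorem stmt_13_general {V : Type*} [DecidableEq V] (Bl : SimpleGraph V) (k n : ℕ) (hn : 2 ≤ n)
    (B X Y X' Y' : ℕ → Finset V)
    (hBclique : ∀ i, 1 ≤ i → i ≤ n → ∀ u ∈ B i, ∀ v ∈ B i, u ≠ v → Bl.Adj u v)
    (hX : ∀ i, 1 ≤ i → i ≤ n - 1 → X i ⊆ B i ∧ (X i).card = 2 * k)
    (hY : ∀ i, 2 ≤ i → i ≤ n → Y i ⊆ B i ∧ (Y i).card = 2 * k)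
    (hXY : ∀ i, 1 ≤ i → i ≤ n - 1 → ∀ u ∈ X i, ∀ v ∈ Y (i + 1), Bl.Adj u v)
    (hX' : ∀ i, 1 ≤ i → i ≤ n - 1 → X' i ⊆ X i)
    (hY' : ∀ i, 2 ≤ i → i ≤ n → Y' i ⊆ Y i)
    (hmid : ∀ i, 2 ≤ i → i ≤ n - 1 →
      (X' i).card = k ∧ (Y' i).card = k ∧ Disjoint (X' i) (Y' i))
    (hX1 : X' 1 = X 1) (hYn : Y' n = Y n)
    (u : Fin (2 * k * n) → V) (hu : Function.Injective u)
    (huU : ∀ j, u j ∈ (Finset.Icc 1 (n - 1)).biUnion X' ∪ (Finset.Icc 2 n).biUnion Y')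
    (hord1 : ∀ i, 2 ≤ i → i ≤ n - 1 →
      ∀ j j' : Fin (2 * k * n), u j ∈ Y' i → u j' ∈ X' i → j < j')
    (hord2 : ∀ i, 1 ≤ i → i ≤ n - 1 →
      ∀ j j' : Fin (2 * k * n), u j ∈ X' i → u j' ∈ Y' (i + 1) → j < j') :
    ∀ j j' : Fin (2 * k * n), (j : ℕ) < (j' : ℕ) → (j' : ℕ) ≤ (j : ℕ) + k →
      Bl.Adj (u j) (u j') := by
  intro j j' hjj' hj'
  have hXB i (h1 : 1 ≤ i) (h2 : i ≤ n - 1) : X' i ⊆ B i := (hX' i h1 h2).trans (hX i h1 h2).1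
  have hYB i (h1 : 2 ≤ i) (h2 : i ≤ n) : Y' i ⊆ B i := (hY' i h1 h2).trans (hY i h1 h2).1
  have hBclq i (h1 : 1 ≤ i) (h2 : i ≤ n) : Bl.IsClique (B i : Set V) := hBclique i h1 h2
  have hinner t (h0 : 0 < t) (ht : t + 1 < 2 * n - 2) : #(interleave X' Y' t) = k := by
    obtain ⟨i, rfl | rfl⟩ := Nat.even_or_odd' t
    · simpa using (hmid (i + 1) (by omega) (by omega)).1
    · simpa using (hmid (i + 2) (by omega) (by omega)).2.1
  refine BlockSequence.adj_of_lt_of_le_add Bl (m := 2 * n - 2) hu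
    (fun j => exists_mem_interleave_of_mem_union (huU j))
    (sum_card_interleave hn (by rw [hX1, (hX 1 le_rfl (by omega)).2])
      (by rw [hYn, (hY n hn le_rfl).2]) hinner).le
    (fun t h0 ht => (hinner t h0 ht).ge) ?_ ?_ ?_ hjj' hj'
  all_goals intro t ht
  · intro a c ha hc
    obtain ⟨i, rfl | rfl⟩ := Nat.even_or_odd' t <;> simp only [interleave_two_mul,
      interleave_two_mul_add_one, interleave_two_mul_add_two] at ha hc
    · exact hord2 (i + 1) (by omega) (by omega) a c ha hc
    · exact hord1 (i + 2) (by omega) (by omega) a c ha hc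
  · obtain ⟨i, rfl | rfl⟩ := Nat.even_or_odd' t <;>
      simp only [interleave_two_mul, interleave_two_mul_add_one]
    · exact (hBclq (i + 1) (by omega) (by omega)).subset (mod_cast hXB _ (by omega) (by omega))
    · exact (hBclq (i + 2) (by omega) (by omega)).subset (mod_cast hYB _ (by omega) (by omega))
  · intro x hx y hy hxy
    obtain ⟨i, rfl | rfl⟩ := Nat.even_or_odd' t <;> simp only [interleave_two_mul,
      interleave_two_mul_add_one, interleave_two_mul_add_two] at hx hy
    · exact hXY (i + 1) (by omega) (by omega) x (hX' _ (by omega) (by omega) hx) y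
        (hY' _ (by omega) (by omega) hy)
    · exact hBclq (i + 2) (by omega) (by omega) (hYB _ (by omega) (by omega) hx)
        (hXB _ (by omega) (by omega) hy) hxy

/-- Case 1: the chosen sets `X'_i, Y'_i` inside the blue cliques `B_i`,
ordered with `Y'_i` before `X'_i` before `Y'_{i+1}`, form a blue copy of `P_{2kn}^k`. -/
theorem stmt_13 {V : Type*} [DecidableEq V] (Bl : SimpleGraph V) (k n : ℕ) (hk : 1 ≤ k) (hn : 2 ≤ n)
    (B X Y X' Y' : ℕ → Finset V)
    (hBdisj : ∀ i j, i ≠ j → Disjoint (B i) (B j))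
    (hBclique : ∀ i, 1 ≤ i → i ≤ n → ∀ u ∈ B i, ∀ v ∈ B i, u ≠ v → Bl.Adj u v)
    (hX : ∀ i, 1 ≤ i → i ≤ n - 1 → X i ⊆ B i ∧ (X i).card = 2 * k)
    (hY : ∀ i, 2 ≤ i → i ≤ n → Y i ⊆ B i ∧ (Y i).card = 2 * k)
    (hXY : ∀ i, 1 ≤ i → i ≤ n - 1 → ∀ u ∈ X i, ∀ v ∈ Y (i + 1), Bl.Adj u v)
    (hX' : ∀ i, 1 ≤ i → i ≤ n - 1 → X' i ⊆ X i)
    (hY' : ∀ i, 2 ≤ i → i ≤ n → Y' i ⊆ Y i)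
    (hmid : ∀ i, 2 ≤ i → i ≤ n - 1 →
      (X' i).card = k ∧ (Y' i).card = k ∧ Disjoint (X' i) (Y' i))
    (hX1 : X' 1 = X 1) (hYn : Y' n = Y n)
    (u : Fin (2 * k * n) → V) (hu : Function.Injective u)
    (huU : ∀ j, u j ∈ (Finset.Icc 1 (n - 1)).biUnion X' ∪ (Finset.Icc 2 n).biUnion Y')
    (hord1 : ∀ i, 2 ≤ i → i ≤ n - 1 →
      ∀ j j' : Fin (2 * k * n), u j ∈ Y' i → u j' ∈ X' i → j < j')
    (hord2 : ∀ i, 1 ≤ i → i ≤ n - 1 →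
      ∀ j j' : Fin (2 * k * n), u j ∈ X' i → u j' ∈ Y' (i + 1) → j < j') :
    ∀ j j' : Fin (2 * k * n), (j : ℕ) < (j' : ℕ) → (j' : ℕ) ≤ (j : ℕ) + k →
      Bl.Adj (u j) (u j') :=
  stmt_13_general Bl k n hn B X Y X' Y' hBclique hX hY hXY hX' hY' hmid hX1 hYn u hu huU hord1 hord2
end
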